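/- Let φ be an endomorphism of a subshift (X, σ) with topological entropy h(σ) = lim (log P_X(n))/n. Then the topological entropy of φ satisfies h(φ) ≤ A(φ)·h(σ), where A(φ) = lim_{n→∞} ℓ(n, φ)/n and ℓ(n, φ) is the minimal length of an interval containing 0 that φ^n-codes {0}. In particular, if A(φ) = 0 then h(φ) = 0. -/

import Mathlib

open Filter Topology

/-- The left shift on bi-infinite sequences. -/
def shift {A : Type*} (x : ℤ → A) : ℤ → A := fun n => x (n + 1)

/-- The shift by `k` places (`σ^k`). -/
def zshift {A : Type*} (k : ℤ) (x : ℤ → A) : ℤ → A := fun n => x (n + k)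

/-- A subshift: a closed, shift-invariant subset of `Σ^ℤ`. -/
def IsSubshift {A : Type*} [TopologicalSpace A] (X : Set (ℤ → A)) : Prop :=
  IsClosed X ∧ shift '' X = X

/-- An endomorphism of the subshift `X`: a continuous shift-commuting surjection of `X`. -/
structure IsEndo {A : Type*} [TopologicalSpace A] (X : Set (ℤ → A))
    (φ : (ℤ → A) → (ℤ → A)) : Prop where
  maps : Set.MapsTo φ X X
  surj : Set.SurjOn φ X X
  cont : ContinuousOn φ X
  comm : ∀ x ∈ X, φ (shift x) = shift (φ x)

/-- `S` φ-codes `T`: agreement of two points of `X` on `S` forces agreement of their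
φ-images on `T`. -/
def Codes {A : Type*} (X : Set (ℤ → A)) (φ : (ℤ → A) → (ℤ → A)) (S T : Set ℤ) : Prop :=
  ∀ x ∈ X, ∀ y ∈ X, (∀ i ∈ S, x i = y i) → ∀ j ∈ T, φ x j = φ y j

/-- The set of integers `W` such that `[0,∞)` φⁿ-codes `[W,∞)`; `W⁺(n,φ)` is its
least element. -/
def WplusSet {A : Type*} (X : Set (ℤ → A)) (φ : (ℤ → A) → (ℤ → A)) (n : ℕ) : Set ℤ :=
  {W | Codes X (φ^[n]) (Set.Ici 0) (Set.Ici W)}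

/-- The set of integers `W` such that `(-∞,0]` φⁿ-codes `(-∞,W]`; `W⁻(n,φ)` is its
greatest element. -/
def WminusSet {A : Type*} (X : Set (ℤ → A)) (φ : (ℤ → A) → (ℤ → A)) (n : ℕ) : Set ℤ :=
  {W | Codes X (φ^[n]) (Set.Iic 0) (Set.Iic W)}

/-- A subshift of finite type: defined by a finite set of excluded words. -/
def IsSFT {A : Type*} (X : Set (ℤ → A)) : Prop :=
  ∃ F : Set (List A), F.Finite ∧
    ∀ x : ℤ → A, x ∈ X ↔ ∀ (n : ℤ), ∀ w ∈ F, ∃ i : Fin w.length, x (n + i) ≠ w.get i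

/-!
If a window `[a, b] ∋ 0` of length `ℓ(k)` `φᵏ`-codes `{0}`, composing translates of it shows
that `[Na - E, Nb + E]` `φʲ`-codes `{0}` for every `j < kN`, where `E` bounds windows for the
finitely many `φʳ`, `r < k`. Hence every `m × kN` rectangle of the spacetime of `φ` is
determined by a word of `X` of length `N ℓ(k) + O(1)`, so
`log P_U(R_{m,kN}) / kN ≤ log P_X(N ℓ(k) + O(1)) / kN → ℓ(k)/k · h(σ)`.
Letting `k → ∞` gives `c m ≤ A(φ) h(σ)`, and then `m → ∞` gives the bound.
-/
open Set

section Shift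

variable {A : Type*}

theorem zshift_zshift (j k : ℤ) (x : ℤ → A) : zshift j (zshift k x) = zshift (k + j) x := by
  funext n; simp only [zshift, add_assoc, add_comm j k]

@[simp] theorem zshift_zero (x : ℤ → A) : zshift 0 x = x := by
  funext n; simp [zshift]

theorem shift_eq_zshift_one (x : ℤ → A) : shift x = zshift 1 x := rfl

theorem shift_injective : Function.Injective (shift : (ℤ → A) → ℤ → A) := fun x y h => by
  funext n; simpa [shift] using congrFun h (n - 1)

def ShiftEquivariantOn (X : Set (ℤ → A)) (ψ : (ℤ → A) → ℤ → A) : Prop :=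
  MapsTo ψ X X ∧ ∀ k : ℤ, ∀ x ∈ X, ψ (zshift k x) = zshift k (ψ x)

theorem ShiftEquivariantOn.iterate {X : Set (ℤ → A)} {ψ : (ℤ → A) → ℤ → A}
    (hψ : ShiftEquivariantOn X ψ) : ∀ p : ℕ, ShiftEquivariantOn X ψ^[p]
  | 0 => ⟨mapsTo_id X, fun _ _ _ => rfl⟩
  | p + 1 => ⟨hψ.1.iterate _, fun k x hx => by
      rw [Function.iterate_succ_apply, Function.iterate_succ_apply, hψ.2 k x hx,
        (hψ.iterate p).2 k _ (hψ.1 hx)]⟩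

variable [TopologicalSpace A] {X : Set (ℤ → A)}

theorem IsSubshift.zshift_mem (hX : IsSubshift X) (k : ℤ) {x : ℤ → A} (hx : x ∈ X) :
    zshift k x ∈ X := by
  induction k using Int.induction_on with
  | zero => simpa
  | succ k ih =>
    rw [← zshift_zshift, ← shift_eq_zshift_one, ← hX.2]
    exact mem_image_of_mem shift ih
  | pred k ih =>
    rw [← hX.2] at ih
    obtain ⟨y, hy, hxy⟩ := ih
    rwa [sub_eq_add_neg, ← zshift_zshift, ← hxy, shift_eq_zshift_one, zshift_zshift,
      add_neg_cancel, zshift_zero]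

theorem IsSubshift.image_zshift (hX : IsSubshift X) (k : ℤ) : zshift k '' X = X :=
  Subset.antisymm (image_subset_iff.2 fun _ hx => hX.zshift_mem k hx) fun x hx =>
    ⟨zshift (-k) x, hX.zshift_mem _ hx, by rw [zshift_zshift, neg_add_cancel, zshift_zero]⟩

theorem IsEndo.shiftEquivariantOn {φ : (ℤ → A) → ℤ → A} (hφ : IsEndo X φ)
    (hX : IsSubshift X) : ShiftEquivariantOn X φ := by
  refine ⟨hφ.maps, fun k => ?_⟩
  induction k using Int.induction_on with
  | zero => simp
  | succ k ih =>
    intro x hx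
    rw [← zshift_zshift, ← zshift_zshift, ← shift_eq_zshift_one, ← shift_eq_zshift_one,
      hφ.comm _ (hX.zshift_mem k hx), ih x hx]
  | pred k ih =>
    intro x hx
    have hshift : ∀ y : ℤ → A, shift (zshift (-k - 1) y) = zshift (-k) y := fun y => by
      rw [shift_eq_zshift_one, zshift_zshift, sub_add_cancel]
    apply shift_injective
    rw [← hφ.comm _ (hX.zshift_mem _ hx), hshift, hshift, ih x hx]

end Shift

section Codes

variable {A : Type*} {X : Set (ℤ → A)} {ψ χ : (ℤ → A) → ℤ → A}

theorem Codes.mono_left {S S' T : Set ℤ} (hS : S ⊆ S') (h : Codes X ψ S T) :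
    Codes X ψ S' T :=
  fun x hx y hy hxy => h x hx y hy fun i hi => hxy i (hS hi)

theorem exists_uniform_codes_Icc {f : ℕ → (ℤ → A) → ℤ → A}
    (h : ∀ r, ∃ a b : ℤ, Codes X (f r) (Icc a b) {0}) (k : ℕ) :
    ∃ E : ℕ, ∀ r < k, Codes X (f r) (Icc (-E) E) {0} := by
  induction k with
  | zero => exact ⟨0, fun r hr => absurd hr (Nat.not_lt_zero r)⟩
  | succ k ih =>
    obtain ⟨E, hE⟩ := ih
    obtain ⟨a, b, hab⟩ := h k
    refine ⟨E + a.natAbs + b.natAbs, fun r hr => ?_⟩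
    rcases Nat.lt_succ_iff_lt_or_eq.1 hr with hr | rfl
    · exact (hE r hr).mono_left (Icc_subset_Icc (by omega) (by omega))
    · exact hab.mono_left (Icc_subset_Icc (by omega) (by omega))

variable [TopologicalSpace A] {a b a' b' : ℤ}

theorem Codes.translate (hX : IsSubshift X) (hψ : ShiftEquivariantOn X ψ)
    (h : Codes X ψ (Icc a b) {0}) (t : ℤ) : Codes X ψ (Icc (a + t) (b + t)) {t} := by
  intro x hx y hy hxy j hj
  obtain rfl : t = j := hj.symm
  have := h _ (hX.zshift_mem _ hx) _ (hX.zshift_mem _ hy)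
    (fun i hi => hxy (i + t) ⟨by linarith [hi.1], by linarith [hi.2]⟩) 0 rfl
  simpa [hψ.2 _ x hx, hψ.2 _ y hy, zshift] using this

theorem Codes.comp (hX : IsSubshift X) (hψ : ShiftEquivariantOn X ψ)
    (h₁ : Codes X ψ (Icc a b) {0}) (h₂ : Codes X χ (Icc a' b') {0}) :
    Codes X (χ ∘ ψ) (Icc (a + a') (b + b')) {0} := by
  rintro x hx y hy hxy _ rfl
  refine h₂ _ (hψ.1 hx) _ (hψ.1 hy) (fun t ht => ?_) 0 rfl
  exact h₁.translate hX hψ t x hx y hy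
    (fun i hi => hxy i ⟨by linarith [hi.1, ht.1], by linarith [hi.2, ht.2]⟩) t rfl

theorem Codes.iterate (hX : IsSubshift X) (hψ : ShiftEquivariantOn X ψ)
    (h : Codes X ψ (Icc a b) {0}) : ∀ q : ℕ, Codes X ψ^[q] (Icc (q * a) (q * b)) {0}
  | 0 => by
    rintro x - y - hxy _ rfl
    simpa using hxy 0 (by simp)
  | q + 1 => by
    have := h.comp hX hψ (h.iterate hX hψ q)
    rw [← Function.iterate_succ] at this
    convert this using 2 <;> push_cast <;> ring

theorem codes_rect_of_codes_iterate (hX : IsSubshift X) {φ : (ℤ → A) → ℤ → A}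
    (hφ : ShiftEquivariantOn X φ) {k E : ℕ} (ha : a ≤ 0) (hb : 0 ≤ b)
    (hk : Codes X φ^[k] (Icc a b) {0}) (hE : ∀ r < k, Codes X φ^[r] (Icc (-E) E) {0})
    (N m : ℕ) :
    ∀ j < k * N, ∀ i < m, Codes X φ^[j] (Icc (N * a - E) (N * b + E + m)) {(i : ℤ)} := by
  intro j hj i hi
  have hkpos : 0 < k := Nat.pos_of_ne_zero fun hk0 => by simp [hk0] at hj
  have hq : j / k ≤ N := Nat.div_le_of_le_mul hj.le
  have hcomp := (hk.iterate hX (hφ.iterate k) (j / k)).comp hX ((hφ.iterate k).iterate _)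
    (hE _ (Nat.mod_lt j hkpos))
  rw [← Function.iterate_mul, ← Function.iterate_add, Nat.mod_add_div] at hcomp
  have hqa : (N : ℤ) * a ≤ (j / k : ℕ) * a := mul_le_mul_of_nonpos_right (by exact_mod_cast hq) ha
  have hqb : ((j / k : ℕ) : ℤ) * b ≤ N * b := mul_le_mul_of_nonneg_right (by exact_mod_cast hq) hb
  refine (hcomp.translate hX (hφ.iterate j) i).mono_left (Icc_subset_Icc ?_ ?_) <;> omega

end Codes

theorem Set.ncard_image_le_ncard_image_of_factor {α β γ : Type*} {s : Set α} {f : α → β}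
    {g : α → γ} (hs : (g '' s).Finite) (h : ∀ x ∈ s, ∀ y ∈ s, g x = g y → f x = f y) :
    (f '' s).ncard ≤ (g '' s).ncard := by
  rcases s.eq_empty_or_nonempty with rfl | ⟨x₀, -⟩
  · simp
  have : Nonempty α := ⟨x₀⟩
  have hfactor : f '' s = (f ∘ Function.invFunOn g s) '' (g '' s) := by
    rw [← image_comp]
    refine image_congr fun x hx => ?_
    exact (h _ (Function.invFunOn_mem ⟨x, hx, rfl⟩) x hx (Function.invFunOn_eq ⟨x, hx, rfl⟩)).symm
  rw [hfactor]
  exact ncard_image_le hs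

theorem Real.log_natCast_le_log_natCast {m n : ℕ} (h : m ≤ n) : Real.log m ≤ Real.log n := by
  rcases m.eq_zero_or_pos with rfl | hm
  · simpa using Real.log_natCast_nonneg n
  · exact Real.log_le_log (by exact_mod_cast hm) (by exact_mod_cast h)

theorem tendsto_comp_div_of_tendsto_div {p : ℕ → ℝ} {f : ℕ → ℕ} {g : ℕ → ℝ} {h α : ℝ}
    (hp : Tendsto (fun n : ℕ => p n / n) atTop (𝓝 h)) (hf : Tendsto f atTop atTop)
    (hfg : Tendsto (fun n => (f n : ℝ) / g n) atTop (𝓝 α)) :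
    Tendsto (fun n => p (f n) / g n) atTop (𝓝 (h * α)) := by
  refine ((hp.comp hf).mul hfg).congr' ?_
  filter_upwards [hf.eventually_ne_atTop 0] with n hn
  exact div_mul_div_cancel₀ (by exact_mod_cast hn)

section Complexity

variable {A : Type*}

noncomputable def wordCount (X : Set (ℤ → A)) (n : ℕ) : ℕ :=
  Nat.card {w : Fin n → A | ∃ x ∈ X, ∀ i : Fin n, x ((i : ℕ) : ℤ) = w i}

noncomputable def rectCount (X : Set (ℤ → A)) (φ : (ℤ → A) → ℤ → A) (m n : ℕ) : ℕ :=
  Nat.card {w : Fin m × Fin n → A |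
    ∃ x ∈ X, ∀ p : Fin m × Fin n, φ^[(p.2 : ℕ)] x ((p.1 : ℕ) : ℤ) = w p}

variable [TopologicalSpace A] {X : Set (ℤ → A)}

theorem rectCount_le_wordCount [Finite A] (hX : IsSubshift X) {φ : (ℤ → A) → ℤ → A}
    {m n K : ℕ} (L : ℤ) (h : ∀ j < n, ∀ i < m, Codes X φ^[j] (Ico L (L + K)) {(i : ℤ)}) :
    rectCount X φ m n ≤ wordCount X K := by
  have hrect : {w : Fin m × Fin n → A |
      ∃ x ∈ X, ∀ p : Fin m × Fin n, φ^[(p.2 : ℕ)] x ((p.1 : ℕ) : ℤ) = w p} =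
      (fun x (p : Fin m × Fin n) => φ^[(p.2 : ℕ)] x ((p.1 : ℕ) : ℤ)) '' X := by
    ext w; simp [funext_iff]
  have hword : {w : Fin K → A | ∃ x ∈ X, ∀ i : Fin K, x ((i : ℕ) : ℤ) = w i} =
      (fun x (i : Fin K) => x ((i : ℕ) + L)) '' X := by
    have hwords : {w : Fin K → A | ∃ x ∈ X, ∀ i : Fin K, x ((i : ℕ) : ℤ) = w i} =
        (fun x (i : Fin K) => x ((i : ℕ) : ℤ)) '' X := by
      ext w; simp [funext_iff]
    rw [hwords]
    conv_lhs => rw [← hX.image_zshift L, image_image]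
    rfl
  rw [rectCount, wordCount, hrect, hword, Nat.card_coe_set_eq, Nat.card_coe_set_eq]
  refine ncard_image_le_ncard_image_of_factor (toFinite _) fun x hx y hy hxy => ?_
  funext p
  refine h p.2 p.2.2 p.1 p.1.2 x hx y hy (fun t ⟨htL, htK⟩ => ?_) _ rfl
  have := congrFun hxy ⟨(t - L).toNat, by omega⟩
  simp only at this
  rwa [Int.toNat_of_nonneg (by omega), sub_add_cancel] at this

end Complexity

theorem le_spread_mul_of_codes {A : Type*} [Finite A] [TopologicalSpace A] {X : Set (ℤ → A)}
    (hX : IsSubshift X) {φ : (ℤ → A) → ℤ → A} (hφ : IsEndo X φ) {hσ cm : ℝ}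
    (hhσ : Tendsto (fun n : ℕ => Real.log (wordCount X n) / n) atTop (𝓝 hσ)) {m : ℕ}
    (hcm : Tendsto (fun n : ℕ => Real.log (rectCount X φ m n) / n) atTop (𝓝 cm))
    (hfin : ∀ r : ℕ, ∃ a b : ℤ, Codes X φ^[r] (Icc a b) {0}) {k ℓ : ℕ} (hk : 0 < k)
    {a b : ℤ} (ha : a ≤ 0) (hb : 0 ≤ b) (hℓ : (ℓ : ℤ) = b - a + 1)
    (hcode : Codes X φ^[k] (Icc a b) {0}) :
    cm ≤ ℓ / k * hσ := by
  obtain ⟨E, hE⟩ := exists_uniform_codes_Icc hfin k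
  -- `N * ℓ` rather than the sharper `N * (ℓ - 1)`, so that `K N → ∞` even when `ℓ = 1`.
  set K : ℕ → ℕ := fun N => N * ℓ + (2 * E + m + 1) with hK
  have hcount : ∀ N, rectCount X φ m (k * N) ≤ wordCount X (K N) := fun N =>
    rectCount_le_wordCount hX (N * a - E) fun j hj i hi =>
      (codes_rect_of_codes_iterate hX (hφ.shiftEquivariantOn hX) ha hb hcode hE N m j hj i
        hi).mono_left (Icc_subset_Ico_right (by simp only [hK]; push_cast; nlinarith))
  have hrect : Tendsto (fun N : ℕ => Real.log (rectCount X φ m (k * N)) / ((k * N : ℕ) : ℝ))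
      atTop (𝓝 cm) :=
    hcm.comp (tendsto_id.const_mul_atTop' hk)
  have hK_top : Tendsto K atTop atTop :=
    tendsto_atTop_mono (fun N => le_add_right (Nat.le_mul_of_pos_right N (by omega)))
      tendsto_id
  have hK_ratio : Tendsto (fun N : ℕ => (K N : ℝ) / ((k * N : ℕ) : ℝ)) atTop (𝓝 (ℓ / k)) := by
    have hlim := (tendsto_const_nhds (x := (ℓ / k : ℝ))).add
      ((tendsto_inv_atTop_nhds_zero_nat (𝕜 := ℝ)).const_mul ((2 * E + m + 1 : ℕ) / k : ℝ))
    rw [mul_zero, add_zero] at hlim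
    refine hlim.congr' ?_
    filter_upwards [eventually_ne_atTop 0] with N hN
    simp only [hK]
    push_cast
    field_simp
  have hword := tendsto_comp_div_of_tendsto_div hhσ hK_top hK_ratio
  rw [mul_comm]
  exact le_of_tendsto_of_tendsto' hrect hword fun N =>
    div_le_div_of_nonneg_right (Real.log_natCast_le_log_natCast (hcount N)) (Nat.cast_nonneg _)

theorem entropy_le_spread_general {A : Type*} [Fintype A] [TopologicalSpace A]
    (X : Set (ℤ → A)) (hX : IsSubshift X)
    (φ : (ℤ → A) → (ℤ → A)) (hφ : IsEndo X φ)
    (hsigma : ℝ)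
    (hhsigma : Tendsto (fun n : ℕ =>
        Real.log (Nat.card {w : Fin n → A | ∃ x ∈ X, ∀ i : Fin n, x ((i : ℕ) : ℤ) = w i}) / n)
      atTop (𝓝 hsigma))
    (c : ℕ → ℝ)
    (hc : ∀ m : ℕ, Tendsto (fun n : ℕ =>
        Real.log (Nat.card {w : Fin m × Fin n → A |
          ∃ x ∈ X, ∀ p : Fin m × Fin n, φ^[(p.2 : ℕ)] x ((p.1 : ℕ) : ℤ) = w p}) / n)
      atTop (𝓝 (c m)))
    (hphi : ℝ) (hhphi : Tendsto c atTop (𝓝 hphi))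
    (l : ℕ → ℕ)
    (hl : ∀ n : ℕ, IsLeast {L : ℕ | ∃ a b : ℤ, a ≤ 0 ∧ 0 ≤ b ∧ (L : ℤ) = b - a + 1 ∧
        Codes X (φ^[n]) (Set.Icc a b) {0}} (l n))
    (Aphi : ℝ) (hA : Tendsto (fun n : ℕ => (l n : ℝ) / n) atTop (𝓝 Aphi)) :
    hphi ≤ Aphi * hsigma ∧ (Aphi = 0 → hphi = 0) := by
  have hfin : ∀ r : ℕ, ∃ a b : ℤ, Codes X φ^[r] (Icc a b) {0} := fun r =>
    let ⟨a, b, _, _, _, hcode⟩ := (hl r).1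
    ⟨a, b, hcode⟩
  have hspread : ∀ m k, 0 < k → c m ≤ l k / k * hsigma := fun m k hk =>
    let ⟨_, _, ha, hb, hℓ, hcode⟩ := (hl k).1
    le_spread_mul_of_codes hX hφ hhsigma (hc m) hfin hk ha hb hℓ hcode
  have hc_le : ∀ m, c m ≤ Aphi * hsigma := fun m =>
    ge_of_tendsto (hA.mul_const hsigma) (eventually_atTop.2 ⟨1, fun k hk => hspread m k hk⟩)
  have hle : hphi ≤ Aphi * hsigma := le_of_tendsto' hhphi hc_le
  have hnonneg : 0 ≤ hphi := ge_of_tendsto' hhphi fun m => ge_of_tendsto' (hc m) fun n =>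
    div_nonneg (Real.log_natCast_nonneg _) n.cast_nonneg
  exact ⟨hle, fun hA0 => le_antisymm (by simpa [hA0] using hle) hnonneg⟩

/-- `h_top(φ) ≤ A(φ) · h_top(σ)`, where `A(φ) = lim ℓ(n,φ)/n` is the asymptotic spread,
`h_top(σ)` is the exponential growth rate of the word complexity of `X`, and `h_top(φ)`
is computed from the complexity of rectangles in the spacetime of `φ`.
In particular if `A(φ) = 0` then `h_top(φ) = 0`. -/
theorem entropy_le_spread {A : Type*} [Fintype A] [TopologicalSpace A]
    [DiscreteTopology A] (X : Set (ℤ → A)) (hX : IsSubshift X) (hinf : X.Infinite)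
    (φ : (ℤ → A) → (ℤ → A)) (hφ : IsEndo X φ)
    (hsigma : ℝ)
    (hhsigma : Tendsto (fun n : ℕ =>
        Real.log (Nat.card {w : Fin n → A | ∃ x ∈ X, ∀ i : Fin n, x ((i : ℕ) : ℤ) = w i}) / n)
      atTop (𝓝 hsigma))
    (c : ℕ → ℝ)
    (hc : ∀ m : ℕ, Tendsto (fun n : ℕ =>
        Real.log (Nat.card {w : Fin m × Fin n → A |
          ∃ x ∈ X, ∀ p : Fin m × Fin n, φ^[(p.2 : ℕ)] x ((p.1 : ℕ) : ℤ) = w p}) / n)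
      atTop (𝓝 (c m)))
    (hphi : ℝ) (hhphi : Tendsto c atTop (𝓝 hphi))
    (l : ℕ → ℕ)
    (hl : ∀ n : ℕ, IsLeast {L : ℕ | ∃ a b : ℤ, a ≤ 0 ∧ 0 ≤ b ∧ (L : ℤ) = b - a + 1 ∧
        Codes X (φ^[n]) (Set.Icc a b) {0}} (l n))
    (Aphi : ℝ) (hA : Tendsto (fun n : ℕ => (l n : ℝ) / n) atTop (𝓝 Aphi)) :
    hphi ≤ Aphi * hsigma ∧ (Aphi = 0 → hphi = 0) :=
  entropy_le_spread_general X hX φ hφ hsigma hhsigma c hc hphi hhphi l hl Aphi hA
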